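/- Let n ≥ 3 be odd and let m : ZMod n → ℤ. Suppose that for all integers i, t the congruence Δ₁(i, t) + m(i−1) + m(t) ≡ m(t−1) + m(i) + Δ₁(i+1, t+1) (mod n) holds, where m is evaluated at the images of the integers in ZMod n. Then ∑_{k ∈ ZMod n} m(k) ≡ 1 (mod n). -/

import Mathlib

/-! For `0 < i < n` the carries in the hypothesis at `t = 0` can be computed: `Δ₁(i, 0) = 1`, and
`Δ₁(i + 1, 1)` is `-1` when `i = n - 1` and `0` otherwise. So, with `c = m(0) - m(-1) + 1`, the
differences `m(i) - m(i - 1)` are all `≡ c` except the last one, which is `≡ c + 1`; hence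
`m(k) ≡ m(0) + k c + [k = n - 1]` for `k < n`. Summing over `k < n`, the terms `n m(0)` and
`c n (n - 1) / 2` vanish mod `n` because `n` is odd, and `1` is left. -/

/-- The carry (Delta-2) function: for integers `η, κ`,
`δ(η, κ) = (η̄ + κ̄ − (η+κ)‾)/n`, where `x̄ = x % n` is the residue of `x` modulo `n`. -/
def carry (n η κ : ℤ) : ℤ := (η % n + κ % n - (η + κ) % n) / n

/-- The Delta-3 function: `Δ_s(i, t) = δ(i, t−i) − δ(i−s, t−i)`. -/
def delta3 (n s i t : ℤ) : ℤ := carry n i (t - i) - carry n (i - s) (t - i)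

open Finset

lemma carry_eq_ediv (n η κ : ℤ) : carry n η κ = (η % n + κ % n) / n := by
  rcases eq_or_ne n 0 with rfl | hn
  · simp [carry]
  rw [carry, Int.add_emod η κ n, Int.emod_def (η % n + κ % n), sub_sub_cancel,
    Int.mul_ediv_cancel_left _ hn]

lemma carry_eq_ite {n : ℤ} (hn : 0 < n) (η κ : ℤ) :
    carry n η κ = if η % n + κ % n < n then 0 else 1 := by
  have := Int.emod_nonneg η hn.ne'
  have := Int.emod_lt_of_pos η hn
  have := Int.emod_nonneg κ hn.ne'
  have := Int.emod_lt_of_pos κ hn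
  rw [carry_eq_ediv]
  split_ifs with h
  · exact Int.ediv_eq_zero_of_lt (by omega) h
  · exact ((Int.ediv_emod_unique (r := η % n + κ % n - n) hn).2
      ⟨by ring, by omega, by omega⟩).1

lemma neg_emod_of_pos_of_lt {n i : ℤ} (hi : 0 < i) (hin : i < n) : -i % n = n - i :=
  ((Int.ediv_emod_unique (q := -1) (hi.trans hin)).2 ⟨by ring, by omega, by omega⟩).2

section

variable {n i : ℤ}

lemma delta3_one_zero (hi : 0 < i) (hin : i < n) : delta3 n 1 i 0 = 1 := by
  rw [delta3, zero_sub, carry_eq_ite (by omega), carry_eq_ite (by omega),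
    neg_emod_of_pos_of_lt hi hin, Int.emod_eq_of_lt (by omega) hin,
    Int.emod_eq_of_lt (by omega) (by omega)]
  split_ifs <;> omega

lemma delta3_one_add_one_one (hi : 0 < i) (hin : i < n) :
    delta3 n 1 (i + 1) 1 = if i + 1 = n then -1 else 0 := by
  have hi' : (i + 1) % n = if i + 1 = n then 0 else i + 1 := by
    split_ifs with h
    · rw [h, Int.emod_self]
    · exact Int.emod_eq_of_lt (by omega) (by omega)
  rw [delta3, show 1 - (i + 1) = -i by ring, add_sub_cancel_right,
    carry_eq_ite (by omega), carry_eq_ite (by omega), neg_emod_of_pos_of_lt hi hin, hi',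
    Int.emod_eq_of_lt (by omega) hin]
  split_ifs <;> omega

end

lemma eq_add_mul_of_succ_eq {R : Type*} [CommRing R] {n : ℕ} (hn : 1 < n) (f : ℕ → R) (c : R)
    (hf : ∀ k, k + 1 < n → f (k + 1) = f k + c + if k + 2 = n then 1 else 0) :
    ∀ k < n, f k = f 0 + k * c + if k + 1 = n then 1 else 0 := by
  intro k hk
  induction k with
  | zero => simp [hn.ne]
  | succ k ih =>
    rw [hf k hk, ih (by omega), if_neg (by omega)]
    push_cast
    ring

lemma ZMod.sum_range_natCast_of_odd {n : ℕ} (hodd : Odd n) :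
    ∑ k ∈ range n, (k : ZMod n) = 0 := by
  obtain ⟨j, rfl⟩ := hodd
  have hgauss : (2 * j + 1) * (2 * j + 1 - 1) / 2 = (2 * j + 1) * j := by
    rw [Nat.add_sub_cancel, mul_left_comm, Nat.mul_div_cancel_left _ two_pos]
  rw [← Nat.cast_sum, sum_range_id, hgauss]
  simp

lemma ZMod.sum_range_add_mul_add_ite_eq_one {n : ℕ} (hodd : Odd n) (a c : ZMod n) :
    ∑ k ∈ range n, (a + k * c + if k + 1 = n then 1 else 0) = 1 := by
  have hn : n - 1 ∈ range n := mem_range.2 (Nat.sub_lt hodd.pos one_pos)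
  have hlast (k : ℕ) : k + 1 = n ↔ k = n - 1 := by have := hodd.pos; omega
  simp_rw [sum_add_distrib, ← sum_mul, ZMod.sum_range_natCast_of_odd hodd, sum_const, card_range,
    nsmul_eq_mul, ZMod.natCast_self, hlast, sum_ite_eq', if_pos hn]
  ring

/-- Let `n ≥ 3` be odd and `m : ZMod n → ℤ`.  If for all integers `i, t` one has
`Δ₁(i, t) + m(i−1) + m(t) ≡ m(t−1) + m(i) + Δ₁(i+1, t+1) (mod n)` (with `m` evaluated at
the images of the integers in `ZMod n`), then `∑ k, m(k) ≡ 1 (mod n)`. -/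
theorem stmt13 (n : ℕ) (hn : 3 ≤ n) (hodd : Odd n) (m : ZMod n → ℤ)
    (h : ∀ i t : ℤ,
      delta3 (n : ℤ) 1 i t + m ((i - 1 : ℤ) : ZMod n) + m ((t : ℤ) : ZMod n) ≡
        m ((t - 1 : ℤ) : ZMod n) + m ((i : ℤ) : ZMod n) +
          delta3 (n : ℤ) 1 (i + 1) (t + 1) [ZMOD n]) :
    (∑ k ∈ Finset.range n, m ((k : ℕ) : ZMod n)) ≡ 1 [ZMOD n] := by
  set c : ZMod n := m 0 - m (-1) + 1
  have step (k : ℕ) (hk : k + 1 < n) : (m (k + 1 : ℕ) : ZMod n) =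
      m k + c + if k + 2 = n then 1 else 0 := by
    have hk' := (ZMod.intCast_eq_intCast_iff _ _ _).2 (h (k + 1) 0)
    rw [delta3_one_zero (by omega) (by omega), zero_add,
      delta3_one_add_one_one (by omega) (by omega)] at hk'
    push_cast [add_sub_cancel_right] at hk' ⊢
    simp only [show (k : ℤ) + 1 + 1 = n ↔ k + 2 = n by omega] at hk'
    split_ifs at hk' ⊢ <;> linear_combination -hk'
  have closed := eq_add_mul_of_succ_eq (by omega) (fun k : ℕ ↦ (m k : ZMod n)) c step
  rw [← ZMod.intCast_eq_intCast_iff, Int.cast_sum, Int.cast_one,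
    sum_congr rfl fun k hk ↦ closed k (mem_range.1 hk)]
  exact ZMod.sum_range_add_mul_add_ite_eq_one hodd _ _
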